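/- arXiv:0806.4717 — 2 statements merged into one kernel-verified Lean document; each statement's English description precedes it below -/
import Mathlib

section
/- For a finite poset P on p elements, promotion satisfies ∂^p = εε*, where ε is evacuation and ε* is dual evacuation given by ε* = (τ_{p-1}⋯τ₁)(τ_{p-1}⋯τ₂)⋯τ_{p-1}. -/
open scoped Classical in
/-- The operator `τ` acting at (0-based) positions `i, i+1` of a word: it swaps the
entries in positions `i` and `i+1` if they are incomparable in `α`, and otherwise
fixes the word.  (This is the operator `τ_{i+1}` of the paper, in 1-based indexing.) -/
noncomputable def tauP {α : Type*} [PartialOrder α] (i : ℕ) (l : List α) : List α :=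
  if h : i + 1 < l.length then
    if l[i]'(Nat.lt_of_succ_lt h) ≤ l[i + 1]'h ∨ l[i + 1]'h ≤ l[i]'(Nat.lt_of_succ_lt h) then l
    else (l.set i (l[i + 1]'h)).set (i + 1) (l[i]'(Nat.lt_of_succ_lt h))
  else l

/-- `l` is a linear extension of the finite poset `α`, written as a word:
it lists every element exactly once, and comparable elements appear in order. -/
def IsLinExt {α : Type*} [PartialOrder α] (l : List α) : Prop :=
  l.Nodup ∧ (∀ x : α, x ∈ l) ∧
    ∀ i j : Fin l.length, l.get i < l.get j → (i : ℕ) < (j : ℕ)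

/-- Apply a sequence of the operators `τ` (given by their 0-based indices),
left to right. -/
noncomputable def applyTau {α : Type*} [PartialOrder α] (is : List ℕ) (l : List α) : List α :=
  is.foldl (fun acc i => tauP i acc) l

/-- Indices (0-based) of the promotion operator `∂ = τ₁τ₂⋯τ_{p-1}`. -/
def promoIdx (p : ℕ) : List ℕ := List.range (p - 1)

/-- Indices (0-based) of the evacuation operator
`ε = (τ₁⋯τ_{p-1})(τ₁⋯τ_{p-2})⋯(τ₁τ₂)τ₁`. -/
def evacIdx (p : ℕ) : List ℕ :=
  (((List.range (p - 1)).reverse).map (fun k => List.range (k + 1))).flatten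

/-- Indices (0-based) of the dual evacuation operator
`ε* = (τ_{p-1}⋯τ₁)(τ_{p-1}⋯τ₂)⋯τ_{p-1}`. -/
def dualEvacIdx (p : ℕ) : List ℕ :=
  ((List.range (p - 1)).map (fun k => ((List.range' k (p - 1 - k))).reverse)).flatten

/-!
Only the relations `τᵢτⱼ = τⱼτᵢ` for `|i - j| ≥ 2` are needed. Write `n = p - 1` and label the
letter `τ_{j+1}` of the `r`-th factor of `∂^(n+1)` by the piece `(r, j)`. The pieces with
`r + j < n`, read row by row, spell `ε`; the others, read diagonal by diagonal (constant `r + j`),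
spell `ε*`. Whenever two pieces are read in opposite orders by the row reading and by this one,
their letters are at least two apart, so the two words act identically.
-/

open List

namespace List

variable {ι X : Type*} (f : ι → X → X)

theorem foldl_apply_of_forall_commute {a : ι} {l : List ι}
    (h : ∀ b ∈ l, Function.Commute (f a) (f b)) (x : X) :
    l.foldl (fun y i => f i y) (f a x) = f a (l.foldl (fun y i => f i y) x) := by
  induction l generalizing x with
  | nil => rfl
  | cons b l ih =>
    simp only [foldl_cons, mem_cons, forall_eq_or_imp] at h ⊢
    rw [← h.1 x, ih h.2]

theorem Perm.foldl_eq_of_pairwise_commute {r : ι → ι → Prop} {l l' : List ι} (hp : l ~ l')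
    (hr : l'.Pairwise r) (hc : l.Pairwise fun a b => r b a → Function.Commute (f a) (f b))
    (x : X) : l.foldl (fun y i => f i y) x = l'.foldl (fun y i => f i y) x := by
  induction l generalizing l' x with
  | nil => rw [hp.nil_eq]
  | cons a t ih =>
    obtain ⟨s, s', rfl⟩ := append_of_mem (hp.subset mem_cons_self)
    have ht : t ~ s ++ s' := (hp.trans perm_middle).cons_inv
    have hr' : (s ++ s').Pairwise r := hr.sublist ((sublist_cons_self a s').append_left s)
    rw [pairwise_cons] at hc
    have hcomm : ∀ b ∈ s, Function.Commute (f a) (f b) := fun b hb =>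
      hc.1 b (ht.symm.subset (mem_append_left _ hb))
        ((pairwise_append.1 hr).2.2 b hb a mem_cons_self)
    rw [foldl_cons, ih ht hr' hc.2, foldl_append, foldl_append,
      foldl_apply_of_forall_commute f hcomm, foldl_cons]

theorem pairwise_range_of_lt {R : ℕ → ℕ → Prop} {n : ℕ}
    (h : ∀ a b, a < b → b < n → R a b) : (range n).Pairwise R :=
  pairwise_lt_range.imp_of_mem fun _ hb hab => h _ _ hab (mem_range.1 hb)

theorem pairwise_range'_of_lt {R : ℕ → ℕ → Prop} {k l : ℕ}
    (h : ∀ a b, k ≤ a → a < b → b < k + l → R a b) : (range' k l).Pairwise R :=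
  (pairwise_lt_range' 1).imp_of_mem fun ha hb hab =>
    h _ _ (mem_range'_1.1 ha).1 hab (mem_range'_1.1 hb).2

end List

section Tau

variable {α : Type*} [PartialOrder α]

theorem length_tauP (i : ℕ) (l : List α) : (tauP i l).length = l.length := by
  unfold tauP; split_ifs <;> simp

theorem tauP_of_length_le {i : ℕ} {l : List α} (h : l.length ≤ i + 1) : tauP i l = l := by
  rw [tauP, dif_neg (by omega)]

theorem tauP_append_left (A : List α) (i : ℕ) (l : List α) :
    tauP (A.length + i) (A ++ l) = A ++ tauP i l := by
  by_cases h : i + 1 < l.length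
  · have h' : A.length + i + 1 < (A ++ l).length := by simp; omega
    rw [tauP, dif_pos h', tauP, dif_pos h]
    split_ifs <;> simp_all [Nat.add_assoc, set_append_right]
  · rw [tauP_of_length_le (by simp; omega), tauP_of_length_le (by omega)]

theorem tauP_append_right {i : ℕ} {A : List α} (hi : i + 1 < A.length) (l : List α) :
    tauP i (A ++ l) = tauP i A ++ l := by
  have h' : i + 1 < (A ++ l).length := by simp; omega
  have e₀ : (A ++ l)[i] = A[i] := getElem_append_left (by omega)
  have e₁ : (A ++ l)[i + 1] = A[i + 1] := getElem_append_left hi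
  rw [tauP, dif_pos h', tauP, dif_pos hi, e₀, e₁]
  split_ifs <;> simp [set_append_left, hi, Nat.lt_of_succ_lt hi]

theorem tauP_comm_of_add_two_le {i j : ℕ} (hij : i + 2 ≤ j) (l : List α) :
    tauP i (tauP j l) = tauP j (tauP i l) := by
  by_cases hl : i + 2 ≤ l.length
  · obtain ⟨k, rfl⟩ := Nat.exists_eq_add_of_le hij
    obtain ⟨A, B, rfl, hA⟩ : ∃ A B, l = A ++ B ∧ A.length = i + 2 :=
      ⟨l.take (i + 2), l.drop (i + 2), (l.take_append_drop _).symm, by simp; omega⟩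
    have hi : i + 1 < A.length := by omega
    rw [← hA, tauP_append_left, tauP_append_right hi, tauP_append_right hi, ← length_tauP i A,
      tauP_append_left]
  · rw [tauP_of_length_le (by omega : l.length ≤ i + 1),
      tauP_of_length_le (by rw [length_tauP]; omega : (tauP j l).length ≤ i + 1)]

theorem tauP_commute {i j : ℕ} (h : i + 2 ≤ j ∨ j + 2 ≤ i) :
    Function.Commute (tauP (α := α) i) (tauP j) := by
  rcases h with h | h
  · exact tauP_comm_of_add_two_le h
  · exact fun l => (tauP_comm_of_add_two_le h l).symm

theorem applyTau_append (a b : List ℕ) (l : List α) :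
    applyTau (a ++ b) l = applyTau b (applyTau a l) :=
  foldl_append

theorem iterate_applyTau (w : List ℕ) (m : ℕ) (l : List α) :
    (fun x => applyTau w x)^[m] l = applyTau (replicate m w).flatten l := by
  induction m with
  | zero => rfl
  | succ m ih =>
    rw [Function.iterate_succ_apply', ih, replicate_succ', flatten_concat, applyTau_append]

theorem applyTau_map_eq_of_perm {ι : Type*} (g : ι → ℕ) {r : ι → ι → Prop} {s s' : List ι}
    (hp : s ~ s') (hr : s'.Pairwise r)
    (hc : s.Pairwise fun a b => r b a → g a + 2 ≤ g b ∨ g b + 2 ≤ g a) (l : List α) :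
    applyTau (s.map g) l = applyTau (s'.map g) l := by
  simp only [applyTau, foldl_map]
  exact hp.foldl_eq_of_pairwise_commute (fun i => tauP (g i)) hr
    (hc.imp fun h hba => tauP_commute (h hba)) l

end Tau

def promotionHeap (m n : ℕ) : List (ℕ × ℕ) :=
  (range m).flatMap fun r => (range n).map (r, ·)

-- The factor `τ₁⋯τ_{k+1}` of `ε` is row `n - 1 - k` of the staircase.
def evacHeap (n : ℕ) : List (ℕ × ℕ) :=
  ((range n).reverse.map fun k => (range (k + 1)).map (n - 1 - k, ·)).flatten

-- The factor `τ_n⋯τ_{k+1}` of `ε*` is the diagonal `r + j = n + k`.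
def dualEvacHeap (n : ℕ) : List (ℕ × ℕ) :=
  ((range n).map fun k => (range' k (n - k)).reverse.map fun j => (n + k - j, j)).flatten

def EvacOrder (n : ℕ) (a b : ℕ × ℕ) : Prop :=
  a.1 + a.2 < n ∧ n ≤ b.1 + b.2 ∨
  a.1 + a.2 < n ∧ b.1 + b.2 < n ∧ (a.1 < b.1 ∨ a.1 = b.1 ∧ a.2 < b.2) ∨
  n ≤ a.1 + a.2 ∧ n ≤ b.1 + b.2 ∧
    (a.1 + a.2 < b.1 + b.2 ∨ a.1 + a.2 = b.1 + b.2 ∧ a.1 < b.1)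

theorem mem_promotionHeap {m n r j : ℕ} : (r, j) ∈ promotionHeap m n ↔ r < m ∧ j < n := by
  simp [promotionHeap]

theorem mem_evacHeap {n r j : ℕ} : (r, j) ∈ evacHeap n ↔ r + j < n := by
  simp only [evacHeap, mem_flatten, mem_map, mem_reverse, mem_range, exists_exists_and_eq_and,
    Prod.mk.injEq]
  constructor
  · rintro ⟨k, hk, j', hj', rfl, rfl⟩
    omega
  · intro h
    exact ⟨n - 1 - r, by omega, j, by omega, by omega, rfl⟩

theorem mem_dualEvacHeap {n r j : ℕ} :
    (r, j) ∈ dualEvacHeap n ↔ r ≤ n ∧ j < n ∧ n ≤ r + j := by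
  simp only [dualEvacHeap, mem_flatten, mem_map, mem_reverse, mem_range, mem_range'_1,
    exists_exists_and_eq_and, Prod.mk.injEq]
  constructor
  · rintro ⟨k, hk, j', hj', rfl, rfl⟩
    omega
  · intro h
    exact ⟨r + j - n, by omega, j, by omega, by omega, rfl⟩

theorem pairwise_promotionHeap (m n : ℕ) :
    (promotionHeap m n).Pairwise fun a b => a.1 < b.1 ∨ a.1 = b.1 ∧ a.2 < b.2 := by
  simp only [promotionHeap, pairwise_flatMap, pairwise_map, forall_mem_map, true_and,
    lt_self_iff_false, false_or]
  exact ⟨fun _ _ => pairwise_lt_range,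
    pairwise_range_of_lt fun _ _ h _ _ _ _ _ => Or.inl h⟩

theorem pairwise_evacHeap (n : ℕ) : (evacHeap n).Pairwise (EvacOrder n) := by
  simp only [evacHeap, EvacOrder, pairwise_flatten, pairwise_map, pairwise_reverse, forall_mem_map,
    mem_reverse, mem_range, true_and]
  exact ⟨fun k hk => pairwise_range_of_lt fun a b hab hb => by omega,
    pairwise_range_of_lt fun a b hab hb => by intros; omega⟩

theorem pairwise_dualEvacHeap (n : ℕ) : (dualEvacHeap n).Pairwise (EvacOrder n) := by
  simp only [dualEvacHeap, EvacOrder, pairwise_flatten, pairwise_map, pairwise_reverse,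
    forall_mem_map, mem_reverse, mem_range, mem_range'_1]
  exact ⟨fun k hk => pairwise_range'_of_lt fun a b ha hab hb => by omega,
    pairwise_range_of_lt fun a b hab hb => by intros; omega⟩

theorem map_snd_promotionHeap (m n : ℕ) :
    (promotionHeap m n).map Prod.snd = (replicate m (range n)).flatten := by
  simp [promotionHeap, flatMap_def, Function.comp_def, map_map, map_const']

theorem map_snd_evacHeap (n : ℕ) : (evacHeap n).map Prod.snd = evacIdx (n + 1) := by
  simp [evacHeap, evacIdx, map_flatten, Function.comp_def, map_map]

theorem map_snd_dualEvacHeap (n : ℕ) : (dualEvacHeap n).map Prod.snd = dualEvacIdx (n + 1) := by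
  simp [dualEvacHeap, dualEvacIdx, map_flatten, Function.comp_def, map_map]

theorem pairwise_evacHeap_append_dualEvacHeap (n : ℕ) :
    (evacHeap n ++ dualEvacHeap n).Pairwise (EvacOrder n) :=
  pairwise_append.2 ⟨pairwise_evacHeap n, pairwise_dualEvacHeap n,
    fun ⟨_, _⟩ ha ⟨_, _⟩ hb => Or.inl ⟨mem_evacHeap.1 ha, (mem_dualEvacHeap.1 hb).2.2⟩⟩

theorem promotionHeap_perm (n : ℕ) : promotionHeap (n + 1) n ~ evacHeap n ++ dualEvacHeap n := by
  have hl : (promotionHeap (n + 1) n).Nodup :=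
    (pairwise_promotionHeap _ _).imp fun h e => by subst e; omega
  have hl' : (evacHeap n ++ dualEvacHeap n).Nodup :=
    (pairwise_evacHeap_append_dualEvacHeap n).imp fun h e => by
      subst e; unfold EvacOrder at h; omega
  refine (perm_ext_iff_of_nodup hl hl').2 fun ⟨r, j⟩ => ?_
  rw [mem_append, mem_promotionHeap, mem_evacHeap, mem_dualEvacHeap]
  omega

theorem pairwise_promotionHeap_far (n : ℕ) :
    (promotionHeap (n + 1) n).Pairwise
      fun a b => EvacOrder n b a → a.2 + 2 ≤ b.2 ∨ b.2 + 2 ≤ a.2 :=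
  (pairwise_promotionHeap _ _).imp_of_mem fun {a b} ha hb hab hba => by
    obtain ⟨r, j⟩ := a
    obtain ⟨r', j'⟩ := b
    rw [mem_promotionHeap] at ha hb
    unfold EvacOrder at hba
    dsimp only at *
    omega

theorem stmt6_general {α : Type*} [PartialOrder α] (p : ℕ) (l : List α) :
    (fun m => applyTau (promoIdx p) m)^[p] l =
      applyTau (dualEvacIdx p) (applyTau (evacIdx p) l) := by
  cases p with
  | zero => rfl
  | succ n =>
    rw [← applyTau_append, iterate_applyTau, promoIdx, Nat.add_sub_cancel,
      ← map_snd_promotionHeap, ← map_snd_evacHeap, ← map_snd_dualEvacHeap, ← map_append]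
    exact applyTau_map_eq_of_perm Prod.snd (promotionHeap_perm n)
      (pairwise_evacHeap_append_dualEvacHeap n) (pairwise_promotionHeap_far n) l

/-- For a finite poset `P` on `p` elements, `∂^p = εε*`, where `ε` is
evacuation and `ε*` is dual evacuation `(τ_{p-1}⋯τ₁)(τ_{p-1}⋯τ₂)⋯τ_{p-1}`. -/
theorem stmt6 {α : Type*} [Fintype α] [PartialOrder α] (p : ℕ) (hp : p = Fintype.card α)
    (l : List α) (hl : IsLinExt l) :
    (fun m => applyTau (promoIdx p) m)^[p] l =
      applyTau (dualEvacIdx p) (applyTau (evacIdx p) l) :=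
  stmt6_general p l
end

section
/- In the Hecke algebra H_n(q), define E_i = (1/(q+1))(q − 1 − 2T_i) and expand E₁E₂⋯E_{n−1} · E₁E₂⋯E_{n−2} ⋯ E₁E₂ · E₁ = Σ_{w∈S_n} c_w(q) T_w in the standard basis {T_w}. Then the coefficient of the identity permutation is c_id(q) = ((q−1)/(q+1))^{⌊n/2⌋}. -/
/-- The Coxeter length (number of inversions) of a permutation of `Fin n`. -/
def invLen {n : ℕ} (u : Equiv.Perm (Fin n)) : ℕ :=
  (Finset.univ.filter (fun p : Fin n × Fin n => p.1 < p.2 ∧ u p.2 < u p.1)).card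

/-- The adjacent transposition `s_{i+1} = (i+1, i+2)` of `Fin n` (0-based `i`). -/
def sgen (n i : ℕ) : Equiv.Perm (Fin n) :=
  if h : i + 1 < n then Equiv.swap ⟨i, Nat.lt_of_succ_lt h⟩ ⟨i + 1, h⟩ else 1

/-- The (0-based) index word of the product `E₁E₂⋯E_{n-1}·E₁E₂⋯E_{n-2}⋯E₁E₂·E₁`. -/
def evacWord (n : ℕ) : List ℕ :=
  (((List.range (n - 1)).reverse).map (fun k => List.range (k + 1))).flatten

/-!
The coefficient of `T_1` is a trace, `τ(T_u T_v) = q ^ ℓ(u) · [v = u⁻¹]`, and the quadratic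
relation `T_i² = q + (q - 1) T_i` makes the `E_i` involutions, with `E_i E_j = E_j E_i` for
`|i - j| ≥ 2`. Write `R_k = E_0 ⋯ E_{k-1}` (0-based) and `W_j = R_j R_{j-1} ⋯ R_1`, so that the
product is `W_{n-1}`. Since `R_{i+1} · E_i E_{i+1} ⋯ E_m = E_{i+1} ⋯ E_m · R_i`, the row `R_{j+1}`
passes leftwards through `W_j`, shedding one letter at each row: `W_j R_{j+1} = E_j W_{j-1}`.
Rotating the first row of `W_{j+1}` to the back therefore gives `τ(W_{j+1}) = τ(E_j W_{j-1})`, and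
iterating, `τ(W_{n-1}) = τ(E_{n-2} E_{n-4} ⋯)`, a product of `⌊n/2⌋` pairwise distant `E_i`. Its
expansion meets `T_1` only in the constant term `((q - 1) / (q + 1)) ^ ⌊n/2⌋`.
-/

open Equiv Finset

section Permutations

variable {n : ℕ}

lemma invLen_one : invLen (1 : Perm (Fin n)) = 0 := by
  rw [invLen, card_eq_zero, filter_eq_empty_iff]
  exact fun p _ hp => lt_asymm hp.1 hp.2

lemma invLen_inv (u : Perm (Fin n)) : invLen u⁻¹ = invLen u :=
  card_equiv ((prodComm _ _).trans (prodCongr u⁻¹ u⁻¹)) fun p => by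
    rw [mem_filter, mem_filter]; simp [and_comm]

lemma sgen_of_lt {i : ℕ} (h : i + 1 < n) : sgen n i = swap ⟨i, by omega⟩ ⟨i + 1, h⟩ := dif_pos h

lemma sgen_of_not_lt {i : ℕ} (h : ¬ i + 1 < n) : sgen n i = 1 := dif_neg h

lemma sgen_mul_self (i : ℕ) : sgen n i * sgen n i = 1 := by
  unfold sgen; split_ifs <;> simp

lemma sgen_inv (i : ℕ) : (sgen n i)⁻¹ = sgen n i :=
  inv_eq_of_mul_eq_one_right (sgen_mul_self i)

lemma sgen_apply_of_ne {i : ℕ} {x : Fin n} (h1 : (x : ℕ) ≠ i) (h2 : (x : ℕ) ≠ i + 1) :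
    sgen n i x = x := by
  unfold sgen; split_ifs
  · exact swap_apply_of_ne_of_ne (by simpa [Fin.ext_iff]) (by simpa [Fin.ext_iff])
  · rfl

lemma invLen_mul_sgen_of_lt {i : ℕ} (h : i + 1 < n) {u : Perm (Fin n)}
    (hu : u ⟨i, by omega⟩ < u ⟨i + 1, h⟩) : invLen (u * sgen n i) = invLen u + 1 := by
  set s := sgen n i
  have hs : ∀ x, s (s x) = x := fun x => by rw [← Perm.mul_apply, sgen_mul_self]; rfl
  -- reindexing by `s × s`, the inversions of `u * s` are the pairs `(x, y)` with `s x < s y` and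
  -- `u y < u x`: the inversions of `u` together with `(i + 1, i)`
  have hreindex : invLen (u * s) =
      #(univ.filter fun p : Fin n × Fin n => s p.1 < s p.2 ∧ u p.2 < u p.1) :=
    card_equiv (prodCongr s s) fun p => by rw [mem_filter, mem_filter]; simp [hs]
  rw [hreindex, invLen, ← card_insert_of_notMem (a := (⟨i + 1, h⟩, ⟨i, by omega⟩))
    (by rw [mem_filter]; exact fun hp => absurd hp.2.1 (by simp [Fin.lt_def]))]
  congr 1
  ext ⟨x, y⟩
  rw [mem_insert, mem_filter, mem_filter]
  simp only [s, sgen_of_lt h, mem_univ, true_and, Prod.mk.injEq]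
  rw [swap_apply_def, swap_apply_def]
  clear hs hreindex
  split_ifs <;> subst_vars <;>
    simp only [Fin.lt_def, Fin.ext_iff, and_self, true_or, iff_true] at * <;> omega

lemma invLen_mul_sgen_of_gt {i : ℕ} (h : i + 1 < n) {u : Perm (Fin n)}
    (hu : u ⟨i + 1, h⟩ < u ⟨i, by omega⟩) : invLen (u * sgen n i) + 1 = invLen u := by
  have key := invLen_mul_sgen_of_lt h (u := u * sgen n i) (by
    simpa [sgen_of_lt h, swap_apply_of_ne_of_ne, Fin.ext_iff] using hu)
  rwa [mul_assoc, sgen_mul_self, mul_one, eq_comm] at key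

lemma invLen_mul_sgen_cases {i : ℕ} (h : i + 1 < n) (u : Perm (Fin n)) :
    invLen (u * sgen n i) = invLen u + 1 ∨ invLen (u * sgen n i) + 1 = invLen u := by
  rcases lt_or_gt_of_ne (u.injective.ne (a₁ := ⟨i, by omega⟩) (a₂ := ⟨i + 1, h⟩) (by simp))
    with hu | hu
  · exact .inl (invLen_mul_sgen_of_lt h hu)
  · exact .inr (invLen_mul_sgen_of_gt h hu)

lemma invLen_sgen_mul (i : ℕ) (w : Perm (Fin n)) :
    invLen (sgen n i * w) = invLen (w⁻¹ * sgen n i) := by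
  rw [← invLen_inv, mul_inv_rev, sgen_inv]

lemma invLen_sgen_mul_cases {i : ℕ} (h : i + 1 < n) (w : Perm (Fin n)) :
    invLen (sgen n i * w) = invLen w + 1 ∨ invLen (sgen n i * w) + 1 = invLen w := by
  rw [invLen_sgen_mul, ← invLen_inv w]
  exact invLen_mul_sgen_cases h _

lemma invLen_sgen {i : ℕ} (h : i + 1 < n) : invLen (sgen n i) = 1 := by
  simpa [invLen_one] using invLen_mul_sgen_of_lt h (u := 1) (by simp [Fin.lt_def])

lemma exists_invLen_mul_sgen_lt {u : Perm (Fin n)} (hu : u ≠ 1) :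
    ∃ i, i + 1 < n ∧ invLen (u * sgen n i) + 1 = invLen u := by
  by_contra! hnone
  refine hu (Perm.ext fun x => ?_)
  have hmono : StrictMono u := by
    obtain _ | m := n
    · exact fun x => x.elim0
    refine Fin.strictMono_iff_lt_succ.2 fun i => ?_
    by_contra hle
    exact hnone i (by omega) (invLen_mul_sgen_of_gt (by omega)
      (lt_of_le_of_ne (not_lt.1 hle) (u.injective.ne (by simp [Fin.ext_iff]))))
  exact congrFun hmono.eq_id x

lemma commute_sgen {i j : ℕ} (hij : i + 2 ≤ j ∨ j + 2 ≤ i) :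
    Commute (sgen n i) (sgen n j) := by
  unfold sgen
  split_ifs <;> try simp only [Commute.one_left, Commute.one_right]
  exact (Perm.disjoint_swap_swap (by simp [Fin.ext_iff]; omega)).commute

lemma invLen_sgen_mul_sgen {i j : ℕ} (hj : j + 1 < n) (hij : i + 2 ≤ j ∨ j + 2 ≤ i) :
    invLen (sgen n i * sgen n j) = invLen (sgen n i) + 1 :=
  invLen_mul_sgen_of_lt hj (by
    rw [sgen_apply_of_ne (by simp; omega) (by simp; omega),
      sgen_apply_of_ne (by simp; omega) (by simp; omega)]
    simp [Fin.lt_def])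

end Permutations

def fixingFrom (n m : ℕ) : Set (Perm (Fin n)) := {w | ∀ k : Fin n, m ≤ (k : ℕ) → w k = k}

section FixingFrom

variable {n i : ℕ} {w : Perm (Fin n)}

lemma one_mem_fixingFrom (m : ℕ) : (1 : Perm (Fin n)) ∈ fixingFrom n m := fun _ _ => rfl

lemma fixingFrom_mono {m m' : ℕ} (h : m ≤ m') : fixingFrom n m ⊆ fixingFrom n m' :=
  fun _ hw k hk => hw k (h.trans hk)

lemma invLen_mul_sgen_of_mem_fixingFrom (h : i + 1 < n) (hw : w ∈ fixingFrom n i) :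
    invLen (w * sgen n i) = invLen w + 1 :=
  invLen_mul_sgen_of_lt h (by rw [hw _ le_rfl, hw _ (by simp)]; simp [Fin.lt_def])

lemma mul_sgen_mem_fixingFrom (hw : w ∈ fixingFrom n i) : w * sgen n i ∈ fixingFrom n (i + 2) :=
  fun k hk => by rw [Perm.mul_apply, sgen_apply_of_ne (by omega) (by omega), hw k (by omega)]

lemma mul_sgen_ne_one (h : i + 1 < n) (hw : w ∈ fixingFrom n i) : w * sgen n i ≠ 1 := by
  intro h1
  have := congrArg (· ⟨i, by omega⟩) h1
  simp [sgen_of_lt h, hw ⟨i + 1, h⟩ (by simp)] at this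

end FixingFrom

namespace Hecke

structure IsStandardBasis {K A : Type*} [CommRing K] [Ring A] [Algebra K A] {n : ℕ} (q : K)
    (T : Perm (Fin n) → A) : Prop where
  map_one : T 1 = 1
  mul_sgen_of_ascent : ∀ (u : Perm (Fin n)) (i : ℕ), i + 1 < n →
    invLen (u * sgen n i) = invLen u + 1 → T u * T (sgen n i) = T (u * sgen n i)
  mul_sgen_of_descent : ∀ (u : Perm (Fin n)) (i : ℕ), i + 1 < n →
    invLen (u * sgen n i) + 1 = invLen u →
    T u * T (sgen n i) = q • T (u * sgen n i) + (q - 1) • T u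

namespace IsStandardBasis

variable {K A : Type*} [CommRing K] [Ring A] [Algebra K A] {n : ℕ} {q : K}
  {T : Perm (Fin n) → A}

theorem sgen_mul (hT : IsStandardBasis q T) {i : ℕ} (hi : i + 1 < n) {w : Perm (Fin n)}
    (h : invLen (sgen n i * w) = invLen w + 1) : T (sgen n i) * T w = T (sgen n i * w) := by
  induction hN : invLen w using Nat.strong_induction_on generalizing w with
  | _ N ih =>
    by_cases hw : w = 1
    · rw [hw, hT.map_one, mul_one, mul_one]
    obtain ⟨j, hj, hdesc⟩ := exists_invLen_mul_sgen_lt hw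
    set w' := w * sgen n j
    have hw' : w' * sgen n j = w := by rw [mul_assoc, sgen_mul_self, mul_one]
    -- `s_i w'` cannot be a descent of `w'`: otherwise `s_i w = s_i w' s_j` would not be longer
    -- than `w`
    have hasc : invLen (sgen n i * w') = invLen w' + 1 := by
      refine (invLen_sgen_mul_cases hi w').resolve_right fun hdown => ?_
      have := invLen_mul_sgen_cases hj (sgen n i * w')
      rw [mul_assoc, hw'] at this
      omega
    have hasc' : invLen (sgen n i * w' * sgen n j) = invLen (sgen n i * w') + 1 := by
      rw [mul_assoc, hw']; omega
    rw [← hw', ← hT.mul_sgen_of_ascent w' j hj (by rw [hw']; omega), ← mul_assoc,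
      ih _ (by omega) hasc rfl, hT.mul_sgen_of_ascent _ j hj hasc', mul_assoc]

theorem repr_basis_mul_basis_apply_one (b : Module.Basis (Perm (Fin n)) K A)
    (hT : IsStandardBasis q ⇑b) (u v : Perm (Fin n)) :
    b.repr (b u * b v) 1 = if v = u⁻¹ then q ^ invLen u else 0 := by
  induction hN : invLen v using Nat.strong_induction_on generalizing u v with
  | _ N ih =>
    by_cases hv : v = 1
    · subst hv
      rw [hT.map_one, mul_one, b.repr_self, Finsupp.single_apply]
      by_cases hu : u = 1
      · simp [hu, invLen_one]
      · simp [hu, eq_comm (a := (1 : Perm (Fin n))), inv_eq_one]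
    obtain ⟨i, hi, hdesc⟩ := exists_invLen_mul_sgen_lt (inv_ne_one.2 hv)
    set v' := sgen n i * v
    have hv' : sgen n i * v' = v := by rw [← mul_assoc, sgen_mul_self, one_mul]
    have hlen : invLen v' + 1 = invLen v := by
      rw [invLen_sgen_mul, ← invLen_inv v]; exact hdesc
    have hcond : v' = (u * sgen n i)⁻¹ ↔ v = u⁻¹ := by
      rw [mul_inv_rev, sgen_inv, mul_right_inj]
    have hsplit : b u * b v = b u * b (sgen n i) * b v' := by
      rw [mul_assoc, hT.sgen_mul hi (by rw [hv']; omega), hv']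
    rcases invLen_mul_sgen_cases hi u with hasc | hdesc
    · rw [hsplit, hT.mul_sgen_of_ascent u i hi hasc, ih _ (by omega) _ _ rfl]
      by_cases huv : v = u⁻¹
      · have h1 := congrArg invLen (hcond.2 huv)
        have h2 := congrArg invLen huv
        rw [invLen_inv] at h1 h2
        omega
      · rw [if_neg (mt hcond.1 huv), if_neg huv]
    · have hne : v' ≠ u⁻¹ := fun he => by
        have h1 := congrArg invLen he
        have h2 : v = (u * sgen n i)⁻¹ := by rw [← hv', he, mul_inv_rev, sgen_inv]
        have h3 := congrArg invLen h2
        rw [invLen_inv] at h1 h3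
        omega
      rw [hsplit, hT.mul_sgen_of_descent u i hi hdesc, add_mul, smul_mul_assoc, smul_mul_assoc,
        map_add, map_smul, map_smul, Finsupp.add_apply, Finsupp.smul_apply, Finsupp.smul_apply,
        ih _ (by omega) _ _ rfl, ih _ (by omega) _ _ rfl, if_neg hne, smul_zero, add_zero]
      by_cases huv : v = u⁻¹
      · rw [if_pos (hcond.2 huv), if_pos huv, smul_eq_mul, ← pow_succ', hdesc]
      · rw [if_neg (mt hcond.1 huv), if_neg huv, smul_zero]

theorem repr_mul_comm_apply_one (b : Module.Basis (Perm (Fin n)) K A)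
    (hT : IsStandardBasis q ⇑b) (x y : A) : b.repr (x * y) 1 = b.repr (y * x) 1 := by
  have key : (LinearMap.mul K A).compr₂ (b.coord 1) =
      ((LinearMap.mul K A).compr₂ (b.coord 1)).flip :=
    LinearMap.ext_basis b b fun u v => by
      simp only [LinearMap.compr₂_apply, LinearMap.flip_apply, LinearMap.mul_apply',
        Module.Basis.coord_apply, repr_basis_mul_basis_apply_one b hT]
      by_cases h : v = u⁻¹
      · simp [h, invLen_inv]
      · rw [if_neg h, if_neg fun h' => h (by rw [h', inv_inv])]
  exact LinearMap.congr_fun₂ key x y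

theorem sgen_mul_sgen (hT : IsStandardBasis q T) {i : ℕ} (hi : i + 1 < n) :
    T (sgen n i) * T (sgen n i) = q • (1 : A) + (q - 1) • T (sgen n i) := by
  have := hT.mul_sgen_of_descent _ i hi (by rw [sgen_mul_self, invLen_one, invLen_sgen hi])
  rwa [sgen_mul_self, hT.map_one] at this

theorem commute_sgen (hT : IsStandardBasis q T) {i j : ℕ} (hij : i + 2 ≤ j ∨ j + 2 ≤ i) :
    Commute (T (sgen n i)) (T (sgen n j)) := by
  by_cases hi : i + 1 < n
  · by_cases hj : j + 1 < n
    · rw [Commute, SemiconjBy, hT.mul_sgen_of_ascent _ j hj (invLen_sgen_mul_sgen hj hij),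
        hT.mul_sgen_of_ascent _ i hi (invLen_sgen_mul_sgen hi hij.symm),
        (_root_.commute_sgen hij).eq]
    · rw [sgen_of_not_lt hj, hT.map_one]; exact Commute.one_right _
  · rw [sgen_of_not_lt hi, hT.map_one]; exact Commute.one_left _

theorem mul_sgen_mem_span (hT : IsStandardBasis q T) {i : ℕ} (hi : i + 1 < n) {x : A}
    (hx : x ∈ Submodule.span K (T '' fixingFrom n i)) :
    x * T (sgen n i) ∈ Submodule.span K (T '' ((· * sgen n i) '' fixingFrom n i)) := by
  induction hx using Submodule.span_induction with
  | mem y hy =>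
    obtain ⟨w, hw, rfl⟩ := hy
    rw [hT.mul_sgen_of_ascent w i hi (invLen_mul_sgen_of_mem_fixingFrom hi hw)]
    exact Submodule.subset_span ⟨_, ⟨w, hw, rfl⟩, rfl⟩
  | zero => rw [zero_mul]; exact Submodule.zero_mem _
  | add y z _ _ hy hz => rw [add_mul]; exact Submodule.add_mem _ hy hz
  | smul c y _ hy => rw [smul_mul_assoc]; exact Submodule.smul_mem _ c hy

end IsStandardBasis

variable {K A : Type*} [Field K] [Ring A] [Algebra K A] {n : ℕ}

def E (q : K) (T : Perm (Fin n) → A) (i : ℕ) : A :=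
  (q + 1)⁻¹ • ((q - 1) • (1 : A) - 2 • T (sgen n i))

variable {q : K} {T : Perm (Fin n) → A}

theorem E_mul_self (hT : IsStandardBasis q T) (hq : q ≠ -1) {i : ℕ} (hi : i + 1 < n) :
    E q T i * E q T i = 1 := by
  have hq1 : q + 1 ≠ 0 := fun h => hq (eq_neg_of_add_eq_zero_left h)
  have hsq : ((q - 1) • (1 : A) - 2 • T (sgen n i)) * ((q - 1) • (1 : A) - 2 • T (sgen n i)) =
      ((q + 1) * (q + 1)) • (1 : A) := by
    simp only [← Nat.cast_smul_eq_nsmul K, sub_mul, mul_sub, smul_mul_assoc, mul_smul_comm,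
      one_mul, mul_one, hT.sgen_mul_sgen hi, smul_add, smul_smul]
    match_scalars <;> ring
  rw [E, smul_mul_smul_comm, hsq, smul_smul, ← mul_inv, inv_mul_cancel₀ (mul_ne_zero hq1 hq1),
    one_smul]

theorem commute_E (hT : IsStandardBasis q T) {i j : ℕ} (hij : i + 2 ≤ j ∨ j + 2 ≤ i) :
    Commute (E q T i) (E q T j) := by
  have h := hT.commute_sgen hij
  refine (Commute.sub_left ?_ (Commute.sub_right ?_ ?_)).smul_left _ |>.smul_right _
  · exact (Commute.one_left _).smul_left _
  · exact (Commute.one_right _).smul_right _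
  · exact (h.smul_left 2).smul_right 2

theorem mul_E_mem_span_and_repr (b : Module.Basis (Perm (Fin n)) K A)
    (hT : IsStandardBasis q ⇑b) {i : ℕ} (hi : i + 1 < n) {x : A}
    (hx : x ∈ Submodule.span K (b '' fixingFrom n i)) :
    x * E q b i ∈ Submodule.span K (b '' fixingFrom n (i + 2)) ∧
      b.repr (x * E q b i) 1 = (q - 1) / (q + 1) * b.repr x 1 := by
  have hxs := hT.mul_sgen_mem_span hi hx
  have hexpand : x * E q b i = (q + 1)⁻¹ • ((q - 1) • x - 2 • (x * b (sgen n i))) := by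
    rw [E, mul_smul_comm, mul_sub, mul_smul_comm, mul_smul_comm, mul_one]
  have hzero : b.repr (x * b (sgen n i)) 1 = 0 :=
    Finsupp.notMem_support_iff.1 fun h1 => by
      obtain ⟨w, hw, hw1⟩ := (Module.Basis.mem_span_image b).1 hxs h1
      exact mul_sgen_ne_one hi hw hw1
  rw [hexpand]
  refine ⟨Submodule.smul_mem _ _ (Submodule.sub_mem _ (Submodule.smul_mem _ _ ?_)
    (Submodule.smul_of_tower_mem _ _ ?_)), ?_⟩
  · exact Submodule.span_mono (Set.image_mono (fixingFrom_mono (by omega))) hx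
  · refine Submodule.span_mono (Set.image_mono ?_) hxs
    rintro _ ⟨w, hw, rfl⟩
    exact mul_sgen_mem_fixingFrom hw
  · rw [map_smul, map_sub, map_smul, map_nsmul, Finsupp.smul_apply, Finsupp.sub_apply,
      Finsupp.smul_apply, Finsupp.smul_apply, hzero, smul_zero, sub_zero, smul_eq_mul, smul_eq_mul,
      div_eq_mul_inv]
    ring

variable (q T)

def row (a k : ℕ) : A := ((List.range' a k).map (E q T)).prod

def stair : ℕ → A
  | 0 => 1
  | j + 1 => row q T 0 (j + 1) * stair j

def altProd : ℕ → A
  | 0 => 1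
  | 1 => E q T 0
  | j + 2 => altProd j * E q T (j + 1)

variable {q T}

lemma stair_zero : stair q T 0 = 1 := rfl

lemma stair_succ (j : ℕ) : stair q T (j + 1) = row q T 0 (j + 1) * stair q T j := rfl

lemma row_zero (a : ℕ) : row q T a 0 = 1 := rfl

lemma row_succ (a k : ℕ) : row q T a (k + 1) = E q T a * row q T (a + 1) k := by
  rw [row, List.range'_succ, List.map_cons, List.prod_cons, row]

lemma row_succ' (a k : ℕ) : row q T a (k + 1) = row q T a k * E q T (a + k) := by
  rw [row, List.range'_concat, List.map_append, List.prod_append, row]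
  simp

lemma prod_map_evacWord : ((evacWord n).map (E q T)).prod = stair q T (n - 1) := by
  rw [evacWord]
  induction n - 1 with
  | zero => rfl
  | succ j ih =>
    rw [List.range_succ, List.reverse_append, List.reverse_singleton, List.singleton_append,
      List.map_cons, List.flatten_cons, List.map_append, List.prod_append, ih, stair_succ, row,
      List.range_eq_range']

lemma row_zero_mul_row (hT : IsStandardBasis q T) (hq : q ≠ -1) {i k : ℕ} (h : i + k + 2 ≤ n) :
    row q T 0 (i + 1) * row q T i (k + 1) = row q T (i + 1) k * row q T 0 i := by
  have hcomm : Commute (row q T 0 i) (row q T (i + 1) k) :=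
    Commute.list_prod_left _ _ fun x hx => Commute.list_prod_right _ _ fun y hy => by
      obtain ⟨a, ha, rfl⟩ := List.mem_map.1 hx
      obtain ⟨c, hc, rfl⟩ := List.mem_map.1 hy
      rw [List.mem_range'_1] at ha hc
      exact commute_E hT (by omega)
  rw [row_succ', row_succ, zero_add, mul_assoc, ← mul_assoc (E q T i),
    E_mul_self hT hq (by omega), one_mul, hcomm.eq]

theorem stair_succ_mul_row (hT : IsStandardBasis q T) (hq : q ≠ -1) {j k : ℕ}
    (h : j + k + 2 ≤ n) :
    stair q T (j + 1) * row q T 0 (j + 1 + k) = row q T (j + 1) k * stair q T j := by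
  induction j generalizing k with
  | zero =>
    rw [stair_succ, stair_zero, mul_one, zero_add, add_comm, row_zero_mul_row hT hq (by omega),
      row_zero]
  | succ j ih =>
    rw [stair_succ, mul_assoc, show j + 1 + 1 + k = j + 1 + (k + 1) by omega, ih (by omega),
      ← mul_assoc, row_zero_mul_row hT hq (by omega), mul_assoc, ← stair_succ]

lemma commute_E_altProd (hT : IsStandardBasis q T) {i j : ℕ} (h : j + 1 ≤ i) :
    Commute (E q T i) (altProd q T j) := by
  induction j using Nat.twoStepInduction with
  | zero => exact Commute.one_right _
  | one => exact commute_E hT (by omega)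
  | more j ih _ => exact (ih (by omega)).mul_right (commute_E hT (by omega))

variable (b : Module.Basis (Perm (Fin n)) K A)

theorem repr_mul_stair_apply_one (hT : IsStandardBasis q ⇑b) (hq : q ≠ -1) {j : ℕ}
    (hj : j ≤ n - 1) {x : A} (hx : ∀ i < j, Commute x (E q b i)) :
    b.repr (x * stair q b j) 1 = b.repr (x * altProd q b j) 1 := by
  induction j using Nat.twoStepInduction generalizing x with
  | zero => rfl
  | one => rw [stair_succ, stair_zero, mul_one, row_succ, row_zero, mul_one]; rfl
  | more j ih _ =>
    have hrow : Commute x (row q b 0 (j + 2)) :=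
      Commute.list_prod_right _ _ fun y hy => by
        obtain ⟨i, hi, rfl⟩ := List.mem_map.1 hy
        exact hx i (by rw [List.mem_range'_1] at hi; omega)
    have hEx : ∀ i < j, Commute (x * E q b (j + 1)) (E q b i) := fun i hi =>
      (hx i (by omega)).mul_left (commute_E hT (by omega))
    calc b.repr (x * stair q b (j + 2)) 1
        = b.repr (x * stair q b (j + 1) * row q b 0 (j + 2)) 1 := by
          rw [stair_succ, ← mul_assoc, hrow.eq, mul_assoc,
            IsStandardBasis.repr_mul_comm_apply_one b hT, mul_assoc]
      _ = b.repr (x * E q b (j + 1) * stair q b j) 1 := by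
          rw [mul_assoc, stair_succ_mul_row hT hq (k := 1) (by omega), row_succ, row_zero,
            mul_one, mul_assoc]
      _ = b.repr (x * altProd q b (j + 2)) 1 := by
          rw [ih (by omega) hEx, mul_assoc, (commute_E_altProd hT le_rfl).eq]; rfl

theorem altProd_mem_span_and_repr (hT : IsStandardBasis q ⇑b) {j : ℕ} (hj : j ≤ n - 1) :
    altProd q b j ∈ Submodule.span K (b '' fixingFrom n (j + 1)) ∧
      b.repr (altProd q b j) 1 = ((q - 1) / (q + 1)) ^ ((j + 1) / 2) := by
  have hone : ∀ m, (1 : A) ∈ Submodule.span K (b '' fixingFrom n m) := fun m =>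
    hT.map_one ▸ Submodule.subset_span ⟨1, one_mem_fixingFrom m, rfl⟩
  have hrepr_one : b.repr 1 1 = 1 := by rw [← hT.map_one, b.repr_self, Finsupp.single_eq_same]
  induction j using Nat.twoStepInduction with
  | zero => exact ⟨hone 1, by rw [altProd, hrepr_one, pow_zero]⟩
  | one =>
    have := mul_E_mem_span_and_repr b hT (by omega) (hone 0)
    rw [one_mul, hrepr_one, mul_one] at this
    simpa [altProd] using this
  | more j ih _ =>
    obtain ⟨hmem, hrepr⟩ := ih (by omega)
    obtain ⟨hmem', hrepr'⟩ := mul_E_mem_span_and_repr b hT (by omega) hmem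
    refine ⟨hmem', ?_⟩
    rw [altProd, hrepr', hrepr, show (j + 2 + 1) / 2 = (j + 1) / 2 + 1 by omega, pow_succ']

end Hecke

open Hecke

theorem stmt15_general {K : Type*} [Field K] {A : Type*} [Ring A] [Algebra K A]
    (n : ℕ) (q : K) (hq : q ≠ -1)
    (T : Equiv.Perm (Fin n) → A) (b : Module.Basis (Equiv.Perm (Fin n)) K A)
    (hb : ∀ w, b w = T w) (hT1 : T 1 = 1)
    (hup : ∀ (u : Equiv.Perm (Fin n)) (i : ℕ), i + 1 < n →
      invLen (u * sgen n i) = invLen u + 1 → T u * T (sgen n i) = T (u * sgen n i))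
    (hdown : ∀ (u : Equiv.Perm (Fin n)) (i : ℕ), i + 1 < n →
      invLen (u * sgen n i) + 1 = invLen u →
      T u * T (sgen n i) = q • T (u * sgen n i) + (q - 1) • T u) :
    b.repr (((evacWord n).map
        (fun i => (q + 1)⁻¹ • ((q - 1) • (1 : A) - 2 • T (sgen n i)))).prod) 1 =
      ((q - 1) / (q + 1)) ^ (n / 2) := by
  obtain rfl : T = ⇑b := funext fun w => (hb w).symm
  have hT : IsStandardBasis q ⇑b := ⟨hT1, hup, hdown⟩
  change b.repr ((evacWord n).map (E q b)).prod 1 = _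
  rw [prod_map_evacWord, ← one_mul (stair q b (n - 1)),
    repr_mul_stair_apply_one b hT hq le_rfl fun _ _ => Commute.one_left _, one_mul,
    (altProd_mem_span_and_repr b hT le_rfl).2, show (n - 1 + 1) / 2 = n / 2 by omega]

/-- In the Hecke algebra `H_n(q)` (presented by a `K`-basis
`{T_w : w ∈ S_n}` with `T_1 = 1` and the standard multiplication rule by generators),
expanding `E₁E₂⋯E_{n-1}·E₁E₂⋯E_{n-2}⋯E₁E₂·E₁ = Σ_w c_w(q) T_w` with
`E_i = (1/(q+1))(q − 1 − 2T_i)`, the coefficient of the identity permutation is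
`c_id(q) = ((q−1)/(q+1))^⌊n/2⌋`. -/
theorem stmt15 {K : Type*} [Field K] [CharZero K] {A : Type*} [Ring A] [Algebra K A]
    (n : ℕ) (q : K) (hq : q ≠ -1)
    (T : Equiv.Perm (Fin n) → A) (b : Module.Basis (Equiv.Perm (Fin n)) K A)
    (hb : ∀ w, b w = T w) (hT1 : T 1 = 1)
    (hup : ∀ (u : Equiv.Perm (Fin n)) (i : ℕ), i + 1 < n →
      invLen (u * sgen n i) = invLen u + 1 → T u * T (sgen n i) = T (u * sgen n i))
    (hdown : ∀ (u : Equiv.Perm (Fin n)) (i : ℕ), i + 1 < n →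
      invLen (u * sgen n i) + 1 = invLen u →
      T u * T (sgen n i) = q • T (u * sgen n i) + (q - 1) • T u) :
    b.repr (((evacWord n).map
        (fun i => (q + 1)⁻¹ • ((q - 1) • (1 : A) - 2 • T (sgen n i)))).prod) 1 =
      ((q - 1) / (q + 1)) ^ (n / 2) :=
  stmt15_general n q hq T b hb hT1 hup hdown
end
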